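/- arXiv:math/0201273 — 3 statements merged into one kernel-verified Lean document; each statement's English description precedes it below -/
import Mathlib

section
/- Let ν be a probability measure on a measurable space Ω and let (u_n) be probability measures on Ω with Kullback–Leibler divergence D(u_n ‖ ν) → 0 as n → ∞. Let p : Ω → ℝ be measurable and suppose there exists δ > 0 such that ∫ exp(t·p(x)) ν(dx) < ∞ for all t with |t| < δ. Then p is integrable with respect to ν and with respect to u_n for all sufficiently large n, and ∫ p du_n → ∫ p dν as n → ∞. -/
open MeasureTheory ENNReal

open scoped Classical in
/-- The Kullback–Leibler divergence `D(μ‖ν) = ∫ log(dμ/dν) dμ`, equal to `+∞`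
if `μ` is not absolutely continuous with respect to `ν` (or if the
log-likelihood ratio is not integrable). -/
noncomputable def klDiv {Ω : Type*} [MeasurableSpace Ω] (μ ν : Measure Ω) : ℝ≥0∞ :=
  if μ ≪ ν ∧ Integrable (llr μ ν) μ then ENNReal.ofReal (∫ x, llr μ ν x ∂μ) else ⊤

/-!
Write `D = D(μ‖ν)` and `M(t) = ∫ exp (t p) dν`. The Fenchel–Young inequality
`a b ≤ (eᵃ - 1) + (b log b + 1 - b)`, applied with `b = dμ/dν` and integrated against `ν`, gives
`t ∫ p dμ ≤ (M(t) - 1) + D` whenever `M(t) < ∞`; with `a = t |p|` it also makes `p` integrable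
under `μ`. Dividing by `t` of either sign and letting `D(uₙ‖ν) → 0` squeezes `∫ p duₙ` between
difference quotients of `M` at `0`, both of which tend to `M'(0) = ∫ p dν`.
-/

open Filter Topology Real ProbabilityTheory

section Squeeze

variable {ι : Type*} {l : Filter ι} {a D : ι → ℝ} {f : ℝ → ℝ} {L : ℝ}

lemma eventually_lt_of_hasDerivAt_of_mul_le_add (hf : HasDerivAt f L 0) (hf0 : f 0 = 0)
    (hD : Tendsto D l (𝓝 0)) (hle : ∀ᶠ t in 𝓝[>] 0, ∀ᶠ i in l, t * a i ≤ f t + D i)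
    {b : ℝ} (hb : L < b) : ∀ᶠ i in l, a i < b := by
  obtain ⟨m, hLm, hmb⟩ := exists_between hb
  have hslope : ∀ᶠ t in 𝓝[>] 0, f t / t < m := by
    have h := (hasDerivAt_iff_tendsto_slope.1 hf).mono_left
      (nhdsWithin_mono _ fun t ht => ne_of_gt ht)
    filter_upwards [h.eventually (gt_mem_nhds hLm)] with t ht
    simpa [slope_def_field, hf0] using ht
  obtain ⟨t, ht_pos : 0 < t, ht_slope, ht_le⟩ :=
    (eventually_mem_nhdsWithin.and (hslope.and hle)).exists
  filter_upwards [ht_le, hD.eventually (gt_mem_nhds (mul_pos ht_pos (sub_pos.2 hmb)))]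
    with i hi hDi
  rw [div_lt_iff₀ ht_pos] at ht_slope
  have : t * a i < t * b := by linarith [mul_sub t b m]
  exact lt_of_mul_lt_mul_left this ht_pos.le

lemma tendsto_of_hasDerivAt_of_mul_le_add (hf : HasDerivAt f L 0) (hf0 : f 0 = 0)
    (hD : Tendsto D l (𝓝 0)) (hle : ∀ᶠ t in 𝓝 0, ∀ᶠ i in l, t * a i ≤ f t + D i) :
    Tendsto a l (𝓝 L) := by
  refine tendsto_order.2 ⟨fun b hb => ?_, fun b hb =>
    eventually_lt_of_hasDerivAt_of_mul_le_add hf hf0 hD (nhdsWithin_le_nhds hle) hb⟩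
  have hf_neg : HasDerivAt (fun t => f (-t)) (-L) 0 := by
    simpa [Function.comp_def] using
      (show HasDerivAt f L (-0) by simpa using hf).comp 0 (hasDerivAt_neg 0)
  have hle_neg : ∀ᶠ t in 𝓝[>] 0, ∀ᶠ i in l, t * -a i ≤ f (-t) + D i := by
    refine nhdsWithin_le_nhds (((continuous_neg.tendsto' 0 0 neg_zero).eventually hle).mono ?_)
    intro t ht
    simpa using ht
  filter_upwards [eventually_lt_of_hasDerivAt_of_mul_le_add hf_neg (by simpa using hf0) hD
    hle_neg (neg_lt_neg hb)] with i hi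
  linarith

end Squeeze

namespace InformationTheory

/-- Fenchel–Young: `a ↦ exp a - 1` is the convex conjugate of `klFun`. -/
lemma mul_le_exp_sub_one_add_klFun (a : ℝ) {b : ℝ} (hb : 0 ≤ b) :
    a * b ≤ exp a - 1 + klFun b := by
  rcases hb.eq_or_lt with rfl | hb
  · simp [klFun_zero, (exp_pos a).le]
  · have h := mul_le_mul_of_nonneg_right (add_one_le_exp (a - log b)) hb.le
    rw [exp_sub, exp_log hb, div_mul_cancel₀ _ hb.ne'] at h
    rw [klFun]
    nlinarith

variable {Ω : Type*} [MeasurableSpace Ω] {μ ν : Measure Ω} [IsFiniteMeasure μ]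
  [IsFiniteMeasure ν] {f : Ω → ℝ}

lemma integrable_of_integrable_exp_mul_abs (hμν : klDiv μ ν ≠ ∞)
    (hf : AEStronglyMeasurable f ν) {t : ℝ} (ht : 0 < t)
    (hexp : Integrable (fun x => exp (t * |f x|)) ν) : Integrable f μ := by
  obtain ⟨hac, hllr⟩ := klDiv_ne_top_iff.1 hμν
  rw [← integrable_rnDeriv_smul_iff hac]
  have hbound : Integrable (fun x => t⁻¹ * (exp (t * |f x|) - 1 +
      klFun (μ.rnDeriv ν x).toReal)) ν :=
    ((hexp.sub (integrable_const 1)).add ((integrable_klFun_rnDeriv_iff hac).2 hllr)).const_mul _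
  refine hbound.mono'
    ((Measure.measurable_rnDeriv μ ν).ennreal_toReal.aestronglyMeasurable.smul hf)
    (ae_of_all _ fun x => ?_)
  have h := mul_le_exp_sub_one_add_klFun (t * |f x|) (b := (μ.rnDeriv ν x).toReal) toReal_nonneg
  rw [norm_smul, Real.norm_eq_abs, Real.norm_eq_abs, abs_of_nonneg toReal_nonneg, mul_comm,
    le_inv_mul_iff₀ ht, ← mul_assoc]
  exact h

lemma integral_le_integral_exp_sub_add_toReal_klDiv (hμν : klDiv μ ν ≠ ∞)
    (hf : Integrable f μ) (hexp : Integrable (fun x => exp (f x)) ν) :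
    ∫ x, f x ∂μ ≤ ∫ x, exp (f x) ∂ν - ν.real Set.univ + (klDiv μ ν).toReal := by
  obtain ⟨hac, hllr⟩ := klDiv_ne_top_iff.1 hμν
  have hklFun := (integrable_klFun_rnDeriv_iff hac).2 hllr
  calc ∫ x, f x ∂μ = ∫ x, (μ.rnDeriv ν x).toReal * f x ∂ν := (integral_rnDeriv_smul hac).symm
    _ ≤ ∫ x, (exp (f x) - 1 + klFun (μ.rnDeriv ν x).toReal) ∂ν := by
      refine integral_mono ((integrable_rnDeriv_smul_iff hac).2 hf)
        ((hexp.sub (integrable_const 1)).add hklFun) fun x => ?_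
      simpa [mul_comm] using mul_le_exp_sub_one_add_klFun (f x) (b := (μ.rnDeriv ν x).toReal)
        toReal_nonneg
    _ = ∫ x, exp (f x) ∂ν - ν.real Set.univ + (klDiv μ ν).toReal := by
      rw [integral_add (f := fun x => exp (f x) - 1) (hexp.sub (integrable_const 1)) hklFun,
        integral_sub hexp (integrable_const 1), toReal_klDiv_eq_integral_klFun hac]
      simp

end InformationTheory

lemma klDiv_eq_klDiv_of_measure_univ_eq {Ω : Type*} [MeasurableSpace Ω] {μ ν : Measure Ω}
    (h : μ Set.univ = ν Set.univ) : klDiv μ ν = InformationTheory.klDiv μ ν := by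
  by_cases hμν : μ ≪ ν ∧ Integrable (llr μ ν) μ
  · rw [klDiv, if_pos hμν, InformationTheory.klDiv_of_ac_of_integrable hμν.1 hμν.2,
      measureReal_def, measureReal_def, h, add_sub_cancel_right]
  · rw [klDiv, if_neg hμν, eq_comm, InformationTheory.klDiv_eq_top_iff]
    exact fun hac hllr => hμν ⟨hac, hllr⟩

theorem integral_tendsto_of_klDiv_tendsto_zero {Ω : Type*} [MeasurableSpace Ω]
    (ν : Measure Ω) [IsProbabilityMeasure ν] (u : ℕ → Measure Ω)
    (hu : ∀ n, IsProbabilityMeasure (u n))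
    (hkl : Filter.Tendsto (fun n => klDiv (u n) ν) Filter.atTop (nhds 0))
    (p : Ω → ℝ) (hp : Measurable p)
    (hexp : ∃ δ > (0 : ℝ), ∀ t : ℝ, |t| < δ →
      Integrable (fun x => Real.exp (t * p x)) ν) :
    Integrable p ν ∧ (∀ᶠ n in Filter.atTop, Integrable p (u n)) ∧
      Filter.Tendsto (fun n => ∫ x, p x ∂(u n)) Filter.atTop (nhds (∫ x, p x ∂ν)) := by
  obtain ⟨δ, hδ, hexp⟩ := hexp
  have h0 : 0 ∈ interior (integrableExpSet p ν) := mem_interior_iff_mem_nhds.2 <|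
    Metric.mem_nhds_iff.2 ⟨δ, hδ, fun t ht => hexp t (by simpa using ht)⟩
  have hkl' : Tendsto (fun n => InformationTheory.klDiv (u n) ν) atTop (𝓝 0) :=
    hkl.congr fun n =>
      klDiv_eq_klDiv_of_measure_univ_eq ((hu n).measure_univ.trans measure_univ.symm)
  have hD : Tendsto (fun n => (InformationTheory.klDiv (u n) ν).toReal) atTop (𝓝 0) := by
    simpa [Function.comp_def] using
      (ENNReal.tendsto_toReal zero_ne_top).comp hkl'
  have hfin : ∀ᶠ n in atTop, InformationTheory.klDiv (u n) ν ≠ ∞ := hkl'.eventually_ne zero_ne_top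
  have habs : Integrable (fun x => exp (δ / 2 * |p x|)) ν := integrable_exp_mul_abs
    (hexp _ (by rw [abs_of_pos (half_pos hδ)]; linarith))
    (hexp _ (by rw [abs_neg, abs_of_pos (half_pos hδ)]; linarith))
  have hpu : ∀ᶠ n in atTop, Integrable p (u n) := hfin.mono fun n hn =>
    have := hu n
    InformationTheory.integrable_of_integrable_exp_mul_abs hn hp.aestronglyMeasurable
      (half_pos hδ) habs
  refine ⟨integrable_of_mem_interior_integrableExpSet h0, hpu, ?_⟩
  have hderiv : HasDerivAt (fun t => mgf p ν t - 1) (∫ x, p x ∂ν) 0 := by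
    simpa using (hasDerivAt_mgf h0).sub_const 1
  refine tendsto_of_hasDerivAt_of_mul_le_add hderiv (by simp) hD ?_
  filter_upwards [mem_interior_iff_mem_nhds.1 h0] with t ht
  filter_upwards [hfin, hpu] with n hn hpn
  have := hu n
  simpa [integral_const_mul, mgf] using
    InformationTheory.integral_le_integral_exp_sub_add_toReal_klDiv hn (hpn.const_mul t) ht
end

section
/- Let f : ℝ → ℝ satisfy: f(0) = 0; f is right-continuous at 0; f is differentiable on (0,∞) with f′(x) > 0 for all x > 0; there exist a₁ > 0 and a₂ > 0 with f′(x) ≥ a₁ for all x > a₂; and there exist q ∈ (1,2) and a₃ > 0 with liminf_{x→0⁺} f′(x)^q / f(x) ≥ a₃. Fix c > 0, set Z_c = ∫₀^∞ exp(−c f(x)) dx, and let X be a real random variable with density g(x) = exp(−c f(x))/Z_c on (0,∞) and 0 elsewhere. Then the random variable Y = f(X) satisfies E|Y − EY|³ < ∞. -/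
/-!
The law of `X` has density `exp (-c f) / Z` on `(0, ∞)`, so it suffices that
`|f x - m| ^ 3 * exp (-c * f x)` is integrable on `(0, ∞)`. This function is continuous on
`[0, ∞)`, and since `f' ≥ a₁` makes `f` grow at least linearly, the bound
`|t - m| ^ 3 * exp (-c * t) = O(exp (-c t / 2))` turns into `O(exp (-c a₁ x / 2))` at infinity.
-/

open MeasureTheory Set Filter Asymptotics Real

lemma ContinuousWithinAt.continuousOn_Ici {f : ℝ → ℝ} {a : ℝ}
    (h : ContinuousWithinAt f (Ici a) a) (hdiff : ∀ x > a, DifferentiableAt ℝ f x) :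
    ContinuousOn f (Ici a) := by
  intro x hx
  rcases (mem_Ici.1 hx).eq_or_lt with rfl | hlt
  · exact h
  · exact (hdiff x hlt).continuousAt.continuousWithinAt

lemma eventually_mul_add_le_of_le_deriv {f : ℝ → ℝ} {a C : ℝ} (hcont : ContinuousOn f (Ici a))
    (hdiff : ∀ x > a, DifferentiableAt ℝ f x) (hderiv : ∀ x > a, C ≤ deriv f x) :
    ∀ᶠ x in atTop, C * x + (f a - C * a) ≤ f x := by
  filter_upwards [eventually_ge_atTop a] with x hx
  have := (convex_Ici a).mul_sub_le_image_sub_of_le_deriv hcont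
    (by rw [interior_Ici]; exact fun y hy => (hdiff y hy).differentiableWithinAt)
    (by simpa using hderiv) a self_mem_Ici x hx hx
  linarith

lemma isBigO_abs_sub_pow_mul_exp_neg_atTop (m : ℝ) (n : ℕ) {c : ℝ} (hc : 0 < c) :
    (fun t => |t - m| ^ n * exp (-c * t)) =O[atTop] fun t => exp (-(c / 2) * t) := by
  have hpow : (fun t => (t - m) ^ n) =o[atTop] fun t => exp (c / 2 * (t - m)) :=
    (isLittleO_pow_exp_pos_mul_atTop n (half_pos hc)).comp_tendsto
      (tendsto_atTop_add_const_right _ (-m) tendsto_id)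
  have hshift : (fun t => exp (c / 2 * (t - m))) =O[atTop] fun t => exp (c / 2 * t) := by
    refine (isBigO_const_mul_self (exp (-(c / 2 * m))) _ _).congr_left fun t => ?_
    rw [← exp_add]; ring_nf
  refine ((hpow.norm_left.trans_isBigO hshift).isBigO.mul
    (isBigO_refl (fun t => exp (-c * t)) _)).congr ?_ ?_
  · intro t; simp [norm_pow]
  · intro t; rw [← exp_add]; ring_nf

lemma integrableOn_Ioi_abs_sub_pow_mul_exp_neg {f : ℝ → ℝ} {x₀ a b c : ℝ} (ha : 0 < a)
    (hc : 0 < c) (hcont : ContinuousOn f (Ici x₀)) (hgrow : ∀ᶠ x in atTop, a * x + b ≤ f x)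
    (m : ℝ) (n : ℕ) : IntegrableOn (fun x => |f x - m| ^ n * exp (-c * f x)) (Ioi x₀) := by
  have htend : Tendsto f atTop atTop :=
    tendsto_atTop_mono' _ hgrow
      (tendsto_atTop_add_const_right _ b (tendsto_id.const_mul_atTop ha))
  have hexp : (fun x => exp (-(c / 2) * f x)) =O[atTop] fun x => exp (-(c * a / 2) * x) := by
    refine IsBigO.of_bound (exp (-(c / 2) * b)) ?_
    filter_upwards [hgrow] with x hx
    rw [norm_of_nonneg (exp_pos _).le, norm_of_nonneg (exp_pos _).le, ← exp_add, exp_le_exp]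
    nlinarith
  refine integrable_of_isBigO_exp_neg (by positivity) ?_
    (((isBigO_abs_sub_pow_mul_exp_neg_atTop m n hc).comp_tendsto htend).trans hexp)
  exact ((hcont.sub continuousOn_const).abs.pow n).mul (continuousOn_const.mul hcont).rexp

lemma integrable_withDensity_indicator_ofReal {α : Type*} [MeasurableSpace α] {μ : Measure α}
    {s : Set α} (hs : MeasurableSet s) {g e : α → ℝ} (hg : AEStronglyMeasurable g (μ.restrict s))
    (he : AEMeasurable e (μ.restrict s)) (hint : IntegrableOn (fun x => g x * e x) s μ) :
    Integrable g (μ.withDensity (s.indicator fun x => ENNReal.ofReal (e x))) := by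
  rw [withDensity_indicator hs, integrable_withDensity_iff_integrable_smul₀' he.ennreal_ofReal
    (ae_of_all _ fun _ => ENNReal.ofReal_lt_top)]
  refine Integrable.mono hint (he.ennreal_ofReal.ennreal_toReal.aestronglyMeasurable.smul hg)
    (ae_of_all _ fun x => ?_)
  rw [ENNReal.toReal_ofReal', smul_eq_mul, norm_mul, norm_mul, mul_comm]
  gcongr
  exact (abs_of_nonneg (le_max_right _ _)).trans_le (max_le (le_abs_self _) (abs_nonneg _))

theorem third_moment_finite_of_gibbs_general
    {Ω : Type*} [MeasurableSpace Ω] (P : Measure Ω)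
    (f : ℝ → ℝ) (hrc : ContinuousWithinAt f (Ici 0) 0)
    (hdiff : ∀ x > (0 : ℝ), DifferentiableAt ℝ f x)
    (a₁ a₂ : ℝ) (ha₁ : 0 < a₁) (ha₂ : 0 < a₂)
    (htail : ∀ x > a₂, a₁ ≤ deriv f x)
    (c : ℝ) (hc : 0 < c) (Z : ℝ)
    (X : Ω → ℝ) (hX : Measurable X)
    (hlaw : Measure.map X P = volume.withDensity
      (fun x => ENNReal.ofReal (if 0 < x then Real.exp (-c * f x) / Z else 0))) :
    Integrable (fun ω => |f (X ω) - ∫ ω', f (X ω') ∂P| ^ 3) P := by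
  have hcont : ContinuousOn f (Ici 0) := hrc.continuousOn_Ici hdiff
  have hcont_pos : ContinuousOn f (Ioi 0) := hcont.mono Ioi_subset_Ici_self
  have hgrow := eventually_mul_add_le_of_le_deriv (hcont.mono (Ici_subset_Ici.2 ha₂.le))
    (fun x hx => hdiff x (ha₂.trans hx)) htail
  have hdensity : (fun x => ENNReal.ofReal (if 0 < x then exp (-c * f x) / Z else 0)) =
      (Ioi 0).indicator fun x => ENNReal.ofReal (exp (-c * f x) / Z) := by
    ext x
    by_cases hx : 0 < x <;> simp [hx]
  have hlaw_int : Integrable (fun x => |f x - ∫ ω', f (X ω') ∂P| ^ 3) (P.map X) := by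
    rw [hlaw, hdensity]
    refine integrable_withDensity_indicator_ofReal measurableSet_Ioi ?_ ?_ ?_
    · exact ((hcont_pos.sub continuousOn_const).abs.pow 3).aestronglyMeasurable measurableSet_Ioi
    · exact ((continuousOn_const.mul hcont_pos).rexp.div_const Z).aemeasurable measurableSet_Ioi
    · simpa only [IntegrableOn, mul_div_assoc] using
        (integrableOn_Ioi_abs_sub_pow_mul_exp_neg ha₁ hc hcont hgrow _ 3).div_const Z
  exact hlaw_int.comp_measurable hX

theorem third_moment_finite_of_gibbs
    {Ω : Type*} [MeasurableSpace Ω] (P : Measure Ω) [IsProbabilityMeasure P]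
    (f : ℝ → ℝ) (hf0 : f 0 = 0) (hrc : ContinuousWithinAt f (Ici 0) 0)
    (hdiff : ∀ x > (0 : ℝ), DifferentiableAt ℝ f x)
    (hderiv : ∀ x > (0 : ℝ), 0 < deriv f x)
    (a₁ a₂ : ℝ) (ha₁ : 0 < a₁) (ha₂ : 0 < a₂)
    (htail : ∀ x > a₂, a₁ ≤ deriv f x)
    (q : ℝ) (hq1 : 1 < q) (hq2 : q < 2) (a₃ : ℝ) (ha₃ : 0 < a₃)
    (hliminf : a₃ ≤ Filter.liminf (fun x => (deriv f x) ^ q / f x) (nhdsWithin 0 (Ioi 0)))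
    (c : ℝ) (hc : 0 < c) (Z : ℝ) (hZ : Z = ∫ x in Ioi (0 : ℝ), Real.exp (-c * f x))
    (X : Ω → ℝ) (hX : Measurable X)
    (hlaw : Measure.map X P = volume.withDensity
      (fun x => ENNReal.ofReal (if 0 < x then Real.exp (-c * f x) / Z else 0))) :
    Integrable (fun ω => |f (X ω) - ∫ ω', f (X ω') ∂P| ^ 3) P :=
  third_moment_finite_of_gibbs_general P f hrc hdiff a₁ a₂ ha₁ ha₂ htail c hc Z X hX hlaw
end

section
/- Let f : [0,∞) → ℝ satisfy: f(0) = 0; f is continuous; f is strictly increasing on (0,∞); and f(x) → ∞ as x → ∞. Suppose moreover that for every c > 0 both Z_c = ∫₀^∞ exp(−c f(x)) dx and ∫₀^∞ f(x) exp(−c f(x)) dx are finite. Then for every t ∈ (0,∞) there exists a unique c > 0 such that ∫₀^∞ f(x) exp(−c f(x)) dx = t · ∫₀^∞ exp(−c f(x)) dx, i.e., the mean energy ε(g_{1,c}) of the Gibbs density g_{1,c}(x) = exp(−c f(x))/Z_c equals t. -/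
/-!
Write `h(c) = ∫ (f - t) e^{-c f} = Z_c (ε(g_{1,c}) - t)`. For `c₀ < c₁` the integrand of `h(c₁)`
is `e^{-(c₁ - c₀) f}` times that of `h(c₀)`, and for `d > 0`, `(y - t) e^{-d y} ≤ (y - t) e^{-d t}` with
equality only at `y = t`; as `f` is injective, `h(c₀) ≤ 0` forces `h(c₁) < 0`, so `h` has at most
one zero. It is continuous by dominated convergence. For small `c` it is positive, because
`Z_c → ∞` while only the bounded interval `{f < t + 1}` contributes negatively; for large `c` it is
negative, because the weight `e^{-c f}` concentrates where `f < t`. The intermediate value theorem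
gives the zero.
-/

open MeasureTheory Set Filter Topology

theorem sub_mul_exp_neg_lt_sub_mul_exp_neg {d y t : ℝ} (hd : 0 < d) (hy : y ≠ t) :
    (y - t) * Real.exp (-d * y) < (y - t) * Real.exp (-d * t) := by
  rcases hy.lt_or_gt with hyt | hyt
  · exact mul_lt_mul_of_neg_left (Real.exp_lt_exp.2 (by nlinarith)) (sub_neg.2 hyt)
  · exact mul_lt_mul_of_pos_left (Real.exp_lt_exp.2 (by nlinarith)) (sub_pos.2 hyt)

theorem sub_mul_exp_neg_le_exp_mul_max {c y u : ℝ} (hc : 1 ≤ c) :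
    (y - u) * Real.exp (-c * y) ≤ Real.exp (-(c - 1) * u) * max ((y - u) * Real.exp (-y)) 0 := by
  rcases le_or_gt y u with hyu | hyu
  · exact (mul_nonpos_of_nonpos_of_nonneg (sub_nonpos.2 hyu) (Real.exp_pos _).le).trans
      (by positivity)
  · calc (y - u) * Real.exp (-c * y) = Real.exp (-(c - 1) * y) * ((y - u) * Real.exp (-y)) := by
          rw [mul_left_comm, ← Real.exp_add]; ring_nf
      _ ≤ Real.exp (-(c - 1) * u) * ((y - u) * Real.exp (-y)) := by
          refine mul_le_mul_of_nonneg_right (Real.exp_le_exp.2 (by nlinarith)) ?_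
          exact mul_nonneg (sub_pos.2 hyu).le (Real.exp_pos _).le
      _ ≤ _ := by gcongr; exact le_max_left _ _

section Gibbs

variable {α : Type*} [MeasurableSpace α] {μ : Measure α} {f : α → ℝ} {t : ℝ}

/-- `Z(c) (ε(c) - t)` in the notation of the paper, for the measure `μ` in place of `dx`. -/
noncomputable def gibbsExcess (μ : Measure α) (f : α → ℝ) (t c : ℝ) : ℝ :=
  ∫ x, (f x - t) * Real.exp (-c * f x) ∂μ

theorem integrable_sub_mul_exp_neg {c : ℝ}
    (hZ : Integrable (fun x => Real.exp (-c * f x)) μ)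
    (hE : Integrable (fun x => f x * Real.exp (-c * f x)) μ) :
    Integrable (fun x => (f x - t) * Real.exp (-c * f x)) μ := by
  simp_rw [sub_mul]
  exact hE.sub (hZ.const_mul t)

theorem gibbsExcess_eq {c : ℝ}
    (hZ : Integrable (fun x => Real.exp (-c * f x)) μ)
    (hE : Integrable (fun x => f x * Real.exp (-c * f x)) μ) :
    gibbsExcess μ f t c =
      (∫ x, f x * Real.exp (-c * f x) ∂μ) - t * ∫ x, Real.exp (-c * f x) ∂μ := by
  simp_rw [gibbsExcess, sub_mul]
  rw [integral_sub hE (hZ.const_mul t), integral_const_mul]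

theorem exp_mul_measureReal_le_integral_exp {A : Set α} {s c : ℝ} (hc : 0 ≤ c)
    (hA : MeasurableSet A) (hfA : ∀ x ∈ A, f x ≤ s)
    (hZ : Integrable (fun x => Real.exp (-c * f x)) μ) :
    Real.exp (-c * s) * μ.real A ≤ ∫ x, Real.exp (-c * f x) ∂μ := by
  have hnonneg : ∀ x, 0 ≤ Real.exp (-c * f x) := fun x => (Real.exp_pos _).le
  calc Real.exp (-c * s) * μ.real A ≤ ∫ x in A, Real.exp (-c * f x) ∂μ := by
        by_cases hAtop : μ A = ⊤
        · simpa [measureReal_def, hAtop] using setIntegral_nonneg hA fun x _ => hnonneg x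
        · exact setIntegral_ge_of_const_le_real hA hAtop
            (fun x hx => Real.exp_le_exp.2 (by nlinarith [hfA x hx])) hZ.integrableOn
    _ ≤ ∫ x, Real.exp (-c * f x) ∂μ := setIntegral_le_integral hZ (.of_forall hnonneg)

theorem continuousOn_gibbsExcess (hf : 0 ≤ᵐ[μ] f)
    (hZ : ∀ c > 0, Integrable (fun x => Real.exp (-c * f x)) μ)
    (hE : ∀ c > 0, Integrable (fun x => f x * Real.exp (-c * f x)) μ) :
    ContinuousOn (gibbsExcess μ f t) (Ioi 0) := by
  intro c₀ hc₀
  have hc₀' : 0 < c₀ / 2 := half_pos hc₀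
  refine (continuousAt_of_dominated (bound := fun x => ‖(f x - t) * Real.exp (-(c₀ / 2) * f x)‖)
    ?_ ?_ (integrable_sub_mul_exp_neg (hZ _ hc₀') (hE _ hc₀')).norm
    (.of_forall fun x => by fun_prop)).continuousWithinAt
  · filter_upwards [eventually_gt_nhds hc₀] with c hc
    exact (integrable_sub_mul_exp_neg (hZ c hc) (hE c hc)).aestronglyMeasurable
  · filter_upwards [eventually_gt_nhds (half_lt_self hc₀)] with c hc
    filter_upwards [hf] with x hx
    simp only [norm_mul, Real.norm_eq_abs, Real.abs_exp]
    gcongr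

theorem gibbsExcess_neg_of_nonpos
    (hZ : ∀ c > 0, Integrable (fun x => Real.exp (-c * f x)) μ)
    (hE : ∀ c > 0, Integrable (fun x => f x * Real.exp (-c * f x)) μ)
    (hne : μ {x | f x ≠ t} ≠ 0) {c₀ c₁ : ℝ} (hc₀ : 0 < c₀) (hc : c₀ < c₁)
    (h₀ : gibbsExcess μ f t c₀ ≤ 0) : gibbsExcess μ f t c₁ < 0 := by
  set d := c₁ - c₀
  set g₀ := fun x => (f x - t) * Real.exp (-c₀ * f x)
  set g₁ := fun x => (f x - t) * Real.exp (-c₁ * f x)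
  have hpt : ∀ x, f x ≠ t → g₁ x < Real.exp (-d * t) * g₀ x := fun x hx => by
    have := mul_lt_mul_of_pos_right (sub_mul_exp_neg_lt_sub_mul_exp_neg (sub_pos.2 hc) hx)
      (Real.exp_pos (-c₀ * f x))
    calc g₁ x = (f x - t) * Real.exp (-d * f x) * Real.exp (-c₀ * f x) := by
          simp only [g₁, d, mul_assoc, ← Real.exp_add]; ring_nf
      _ < _ := this
      _ = _ := by ring
  have hle : ∀ x, g₁ x ≤ Real.exp (-d * t) * g₀ x := fun x => by
    rcases eq_or_ne (f x) t with hx | hx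
    · simp [g₀, g₁, hx]
    · exact (hpt x hx).le
  have hint₀ := integrable_sub_mul_exp_neg (t := t) (hZ c₀ hc₀) (hE c₀ hc₀)
  have hint₁ := integrable_sub_mul_exp_neg (t := t) (hZ c₁ (hc₀.trans hc)) (hE c₁ (hc₀.trans hc))
  have hlt : gibbsExcess μ f t c₁ < Real.exp (-d * t) * gibbsExcess μ f t c₀ := by
    rw [gibbsExcess, gibbsExcess, ← integral_const_mul, ← sub_pos, ← integral_sub
      (hint₀.const_mul _) hint₁, integral_pos_iff_support_of_nonneg_ae
      (.of_forall fun x => sub_nonneg.2 (hle x)) ((hint₀.const_mul _).sub hint₁)]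
    exact pos_iff_ne_zero.2 fun h => hne (measure_mono_null
      (fun x hx => (sub_pos.2 (hpt x hx)).ne') h)
  exact hlt.trans_le (mul_nonpos_of_nonneg_of_nonpos (Real.exp_pos _).le h₀)

theorem eq_of_gibbsExcess_eq_zero
    (hZ : ∀ c > 0, Integrable (fun x => Real.exp (-c * f x)) μ)
    (hE : ∀ c > 0, Integrable (fun x => f x * Real.exp (-c * f x)) μ)
    (hne : μ {x | f x ≠ t} ≠ 0) {c₀ c₁ : ℝ} (hc₀ : 0 < c₀) (hc₁ : 0 < c₁)
    (h₀ : gibbsExcess μ f t c₀ = 0) (h₁ : gibbsExcess μ f t c₁ = 0) : c₀ = c₁ := by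
  by_contra hne'
  rcases lt_or_gt_of_ne hne' with h | h
  · exact (gibbsExcess_neg_of_nonpos hZ hE hne hc₀ h h₀.le).ne h₁
  · exact (gibbsExcess_neg_of_nonpos hZ hE hne hc₁ h h₁.le).ne h₀

theorem gibbsExcess_le_of_one_le {A : Set α} {s u c : ℝ}
    (hZ : ∀ c > 0, Integrable (fun x => Real.exp (-c * f x)) μ)
    (hE : ∀ c > 0, Integrable (fun x => f x * Real.exp (-c * f x)) μ)
    (hA : MeasurableSet A) (hfA : ∀ x ∈ A, f x ≤ s) (hut : u ≤ t) (hc : 1 ≤ c) :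
    gibbsExcess μ f t c ≤ (u - t) * (Real.exp (-c * s) * μ.real A) +
      Real.exp (-(c - 1) * u) * ∫ x, max ((f x - u) * Real.exp (-f x)) 0 ∂μ := by
  have hc₀ : 0 < c := one_pos.trans_le hc
  have hK : Integrable (fun x => max ((f x - u) * Real.exp (-f x)) 0) μ := by
    simpa using (integrable_sub_mul_exp_neg (t := u) (hZ 1 one_pos) (hE 1 one_pos)).pos_part
  calc gibbsExcess μ f t c
      ≤ ∫ x, ((u - t) * Real.exp (-c * f x) +
          Real.exp (-(c - 1) * u) * max ((f x - u) * Real.exp (-f x)) 0) ∂μ := by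
        refine integral_mono (integrable_sub_mul_exp_neg (hZ c hc₀) (hE c hc₀))
          (((hZ c hc₀).const_mul _).add (hK.const_mul _)) fun x => ?_
        have := sub_mul_exp_neg_le_exp_mul_max (y := f x) (u := u) hc
        dsimp only
        linarith
    _ = (u - t) * (∫ x, Real.exp (-c * f x) ∂μ) +
          Real.exp (-(c - 1) * u) * ∫ x, max ((f x - u) * Real.exp (-f x)) 0 ∂μ := by
        rw [integral_add ((hZ c hc₀).const_mul _) (hK.const_mul _), integral_const_mul,
          integral_const_mul]
    _ ≤ _ := by
        gcongr ?_ + _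
        exact mul_le_mul_of_nonpos_left
          (exp_mul_measureReal_le_integral_exp hc₀.le hA hfA (hZ c hc₀)) (sub_nonpos.2 hut)

theorem eventually_gibbsExcess_neg_atTop {A : Set α} {s : ℝ}
    (hZ : ∀ c > 0, Integrable (fun x => Real.exp (-c * f x)) μ)
    (hE : ∀ c > 0, Integrable (fun x => f x * Real.exp (-c * f x)) μ)
    (hA : MeasurableSet A) (hA₀ : 0 < μ.real A) (hfA : ∀ x ∈ A, f x ≤ s) (hst : s < t) :
    ∀ᶠ c in atTop, gibbsExcess μ f t c < 0 := by
  obtain ⟨u, hsu, hut⟩ := exists_between hst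
  set K := ∫ x, max ((f x - u) * Real.exp (-f x)) 0 ∂μ
  -- after scaling by `e^{c s}` the bound tends to `(u - t) μ(A) < 0`
  have hlim : Tendsto (fun c => (u - t) * μ.real A + Real.exp u * K * Real.exp (-(c * (u - s))))
      atTop (𝓝 ((u - t) * μ.real A + Real.exp u * K * 0)) :=
    tendsto_const_nhds.add (tendsto_const_nhds.mul (Real.tendsto_exp_neg_atTop_nhds_zero.comp
      (tendsto_id.atTop_mul_const (by linarith))))
  have hneg : (u - t) * μ.real A + Real.exp u * K * 0 < 0 := by
    rw [mul_zero, add_zero]; exact mul_neg_of_neg_of_pos (by linarith) hA₀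
  filter_upwards [hlim.eventually (gt_mem_nhds hneg), eventually_ge_atTop 1] with c hc hc₁
  refine (gibbsExcess_le_of_one_le hZ hE hA hfA hut.le hc₁).trans_lt ?_
  calc (u - t) * (Real.exp (-c * s) * μ.real A) + Real.exp (-(c - 1) * u) * K
      = Real.exp (-c * s) *
          ((u - t) * μ.real A + Real.exp u * K * Real.exp (-(c * (u - s)))) := by
        have : Real.exp (-(c - 1) * u) =
            Real.exp (-c * s) * Real.exp u * Real.exp (-(c * (u - s))) := by
          rw [← Real.exp_add, ← Real.exp_add]; ring_nf
        rw [this]; ring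
    _ < 0 := mul_neg_of_pos_of_neg (Real.exp_pos _) hc

theorem sub_mul_integral_exp_sub_le_gibbsExcess {S : Set α} {u c : ℝ} (hf : 0 ≤ᵐ[μ] f)
    (hZ : Integrable (fun x => Real.exp (-c * f x)) μ)
    (hE : Integrable (fun x => f x * Real.exp (-c * f x)) μ)
    (hS : MeasurableSet S) (hSμ : μ S ≠ ⊤) (hfS : ∀ᵐ x ∂μ, x ∉ S → u ≤ f x)
    (hu : 0 ≤ u) (hc : 0 ≤ c) :
    (u - t) * (∫ x, Real.exp (-c * f x) ∂μ) - u * μ.real S ≤ gibbsExcess μ f t c := by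
  have hind : Integrable (S.indicator fun _ => u) μ :=
    (integrable_indicator_iff hS).2 (integrableOn_const hSμ)
  calc (u - t) * (∫ x, Real.exp (-c * f x) ∂μ) - u * μ.real S
      = ∫ x, ((u - t) * Real.exp (-c * f x) - S.indicator (fun _ => u) x) ∂μ := by
        rw [integral_sub (hZ.const_mul _) hind, integral_const_mul, integral_indicator_const _ hS,
          smul_eq_mul, mul_comm (μ.real S)]
    _ ≤ gibbsExcess μ f t c := by
        refine integral_mono_ae ((hZ.const_mul _).sub hind) (integrable_sub_mul_exp_neg hZ hE) ?_
        filter_upwards [hf, hfS] with x (hx : 0 ≤ f x) hxS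
        have he : Real.exp (-c * f x) ≤ 1 := Real.exp_le_one_iff.2 (by nlinarith)
        by_cases hxS' : x ∈ S
        · rw [indicator_of_mem hxS']
          nlinarith [mul_nonneg hx (Real.exp_pos (-c * f x)).le, mul_nonneg hu (sub_nonneg.2 he)]
        · rw [indicator_of_notMem hxS', sub_zero]
          exact mul_le_mul_of_nonneg_right (by linarith [hxS hxS']) (Real.exp_pos _).le

theorem eventually_gibbsExcess_pos_nhdsGT {S : Set α} {u : ℝ} (hf : 0 ≤ᵐ[μ] f)
    (hZ : ∀ c > 0, Integrable (fun x => Real.exp (-c * f x)) μ)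
    (hE : ∀ c > 0, Integrable (fun x => f x * Real.exp (-c * f x)) μ)
    (hS : MeasurableSet S) (hSμ : μ S ≠ ⊤) (hfS : ∀ᵐ x ∂μ, x ∉ S → u ≤ f x)
    (hu : 0 ≤ u) (htu : t < u)
    (hZtop : Tendsto (fun c => ∫ x, Real.exp (-c * f x) ∂μ) (𝓝[>] 0) atTop) :
    ∀ᶠ c in 𝓝[>] 0, 0 < gibbsExcess μ f t c := by
  have hlim : Tendsto (fun c => (u - t) * (∫ x, Real.exp (-c * f x) ∂μ) - u * μ.real S)
      (𝓝[>] 0) atTop :=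
    tendsto_atTop_add_const_right _ _ (hZtop.const_mul_atTop (sub_pos.2 htu))
  filter_upwards [hlim.eventually_gt_atTop 0, self_mem_nhdsWithin] with c hc hc₀
  exact hc.trans_le
    (sub_mul_integral_exp_sub_le_gibbsExcess hf (hZ c hc₀) (hE c hc₀) hS hSμ hfS hu hc₀.le)

end Gibbs

theorem StrictMonoOn.lt_of_tendsto_nhdsGT {g : ℝ → ℝ} {a b x : ℝ} (hg : StrictMonoOn g (Ioi a))
    (hlim : Tendsto g (𝓝[>] a) (𝓝 b)) (hx : a < x) : b < g x := by
  obtain ⟨m, ham, hmx⟩ := exists_between hx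
  have hbm : b ≤ g m := le_of_tendsto hlim <| by
    filter_upwards [Ioo_mem_nhdsGT ham] with y hy using (hg hy.1 ham hy.2).le
  exact hbm.trans_lt (hg ham (ham.trans hmx) hmx)

theorem measureReal_restrict_Ioi_zero_Ioc {B : ℝ} (hB : 0 ≤ B) :
    (volume.restrict (Ioi (0 : ℝ))).real (Ioc 0 B) = B := by
  rw [measureReal_restrict_apply measurableSet_Ioc, inter_eq_left.2 Ioc_subset_Ioi_self,
    Real.volume_real_Ioc_of_le hB, sub_zero]

theorem tendsto_integral_exp_neg_mul_nhdsGT {f : ℝ → ℝ} (hf : MonotoneOn f (Ioi 0))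
    (hZ : ∀ c > (0 : ℝ), IntegrableOn (fun x => Real.exp (-c * f x)) (Ioi 0)) :
    Tendsto (fun c => ∫ x in Ioi (0 : ℝ), Real.exp (-c * f x)) (𝓝[>] 0) atTop := by
  refine tendsto_atTop.2 fun M => ?_
  obtain ⟨B, hMB, hB⟩ : ∃ B, M < B ∧ 0 < B := ⟨max M 0 + 1, by grind, by positivity⟩
  have hlim : Tendsto (fun c => Real.exp (-c * f B) * B) (𝓝[>] 0) (𝓝 B) := by
    have : Continuous fun c => Real.exp (-c * f B) * B := by fun_prop
    simpa using (this.tendsto 0).mono_left nhdsWithin_le_nhds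
  filter_upwards [hlim.eventually (lt_mem_nhds hMB), self_mem_nhdsWithin] with c hcM hc
  calc M ≤ Real.exp (-c * f B) * B := hcM.le
    _ = Real.exp (-c * f B) * (volume.restrict (Ioi (0 : ℝ))).real (Ioc 0 B) := by
        rw [measureReal_restrict_Ioi_zero_Ioc hB.le]
    _ ≤ _ := exp_mul_measureReal_le_integral_exp hc.le measurableSet_Ioc
        (fun x hx => hf hx.1 hB hx.2) (hZ c hc)

theorem measure_restrict_Ioi_setOf_ne_ne_zero {f : ℝ → ℝ} (hf : InjOn f (Ioi 0)) (t : ℝ) :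
    volume.restrict (Ioi (0 : ℝ)) {x | f x ≠ t} ≠ 0 := by
  intro h
  have heq : volume.restrict (Ioi (0 : ℝ)) {x | f x = t} = 0 := by
    rw [Measure.restrict_apply' measurableSet_Ioi]
    exact Subsingleton.measure_zero (fun x hx y hy => hf hx.2 hy.2 (hx.1.trans hy.1.symm)) _
  have huniv := measure_union_null h heq
  rw [show {x | f x ≠ t} ∪ {x | f x = t} = univ by ext; simp [em']] at huniv
  simp at huniv

theorem exists_unique_gibbs_parameter
    (f : ℝ → ℝ) (hf0 : f 0 = 0) (hcont : ContinuousOn f (Ici 0))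
    (hmono : StrictMonoOn f (Ioi 0))
    (htop : Filter.Tendsto f Filter.atTop Filter.atTop)
    (hZfin : ∀ c > (0 : ℝ), IntegrableOn (fun x => Real.exp (-c * f x)) (Ioi 0) volume)
    (hEfin : ∀ c > (0 : ℝ),
      IntegrableOn (fun x => f x * Real.exp (-c * f x)) (Ioi 0) volume) :
    ∀ t ∈ Ioi (0 : ℝ), ∃! c : ℝ, 0 < c ∧
      (∫ x in Ioi (0 : ℝ), f x * Real.exp (-c * f x)) =
        t * ∫ x in Ioi (0 : ℝ), Real.exp (-c * f x) := by
  intro t (ht : 0 < t)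
  have hlim : Tendsto f (𝓝[>] 0) (𝓝 0) := by
    simpa [hf0] using ((hcont 0 self_mem_Ici).mono Ioi_subset_Ici_self).tendsto
  have hf : 0 ≤ᵐ[volume.restrict (Ioi 0)] f := (ae_restrict_iff' measurableSet_Ioi).2
    (.of_forall fun x hx => (hmono.lt_of_tendsto_nhdsGT hlim hx).le)
  obtain ⟨δ, hfδ, hδ⟩ := ((hlim.eventually (gt_mem_nhds ht)).and self_mem_nhdsWithin).exists
  obtain ⟨A, hfA, hA⟩ := ((htop.eventually_ge_atTop (t + 1)).and (eventually_gt_atTop 0)).exists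
  have hneg := eventually_gibbsExcess_neg_atTop hZfin hEfin measurableSet_Ioc
    (by rwa [measureReal_restrict_Ioi_zero_Ioc hδ.le])
    (fun x hx => hmono.monotoneOn hx.1 hδ hx.2) hfδ
  have hpos := eventually_gibbsExcess_pos_nhdsGT hf hZfin hEfin measurableSet_Ioc
    ((Measure.restrict_apply_le _ _).trans_lt measure_Ioc_lt_top).ne
    ((ae_restrict_iff' measurableSet_Ioi).2 (.of_forall fun x hx hxA =>
      hfA.trans (hmono.monotoneOn hA hx (not_le.1 fun h => hxA ⟨hx, h⟩).le)))
    (by linarith) (lt_add_one t) (tendsto_integral_exp_neg_mul_nhdsGT hmono.monotoneOn hZfin)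
  obtain ⟨c₁, hc₁, hc₁pos⟩ := (hpos.and self_mem_nhdsWithin).exists
  obtain ⟨c₂, hc₂, hc₂pos⟩ := (hneg.and (eventually_gt_atTop 0)).exists
  obtain ⟨c, hc, hc0⟩ := isPreconnected_Ioi.intermediate_value hc₂pos hc₁pos
    (continuousOn_gibbsExcess hf hZfin hEfin) ⟨hc₂.le, hc₁.le⟩
  have hiff : ∀ c > 0, gibbsExcess (volume.restrict (Ioi 0)) f t c = 0 ↔
      (∫ x in Ioi (0 : ℝ), f x * Real.exp (-c * f x)) =
        t * ∫ x in Ioi (0 : ℝ), Real.exp (-c * f x) := fun c hc => by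
    rw [gibbsExcess_eq (hZfin c hc) (hEfin c hc), sub_eq_zero]
  exact ⟨c, ⟨hc, (hiff c hc).1 hc0⟩, fun c' ⟨hc', hc'E⟩ => eq_of_gibbsExcess_eq_zero hZfin hEfin
    (measure_restrict_Ioi_setOf_ne_ne_zero hmono.injOn t) hc' hc ((hiff c' hc').2 hc'E) hc0⟩
end
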